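/- arXiv:1502.03607 — 2 statements merged into one kernel-verified Lean document; each statement's English description precedes it below -/
import Mathlib

section
/- Let A be a nontrivial additive abelian group, (·,·): A × A → F a nondegenerate symmetric form with values in a field F of characteristic zero, and R a subset of A. If the triple (A, (·,·), R) satisfies axioms (S1), (S3), (S4) and (S5) of an extended affine root supersystem, then it also satisfies (S2), i.e., R = −R. -/
open Pointwise

/-- A symmetric biadditive form with values in `F`. -/
structure IsSymForm {F : Type*} [Field F] {A : Type*} [AddCommGroup A]
    (form : A → A → F) : Prop where
  symm : ∀ a b, form a b = form b a
  add_left : ∀ a b c, form (a + b) c = form a c + form b c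

/-- The radical `A⁰` of a form. -/
def formRadical {F : Type*} [Field F] {A : Type*} [AddCommGroup A]
    (form : A → A → F) : Set A := {a | ∀ b, form a b = 0}

/-- The set of real roots `R_re = {α ∈ R | (α,α) ≠ 0} ∪ {0}`. -/
def reRoots {F : Type*} [Field F] {A : Type*} [AddCommGroup A]
    (form : A → A → F) (R : Set A) : Set A :=
  {α | α ∈ R ∧ form α α ≠ 0} ∪ {0}

/-- The set of nonsingular roots `R_ns = {α ∈ R \ A⁰ | (α,α) = 0} ∪ {0}`. -/
def nsRoots {F : Type*} [Field F] {A : Type*} [AddCommGroup A]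
    (form : A → A → F) (R : Set A) : Set A :=
  {α | α ∈ R ∧ form α α = 0 ∧ α ∉ formRadical form} ∪ {0}

/-- Extended affine root supersystem. -/
structure IsEARS {F : Type*} [Field F] [CharZero F] {A : Type*} [AddCommGroup A]
    (form : A → A → F) (R : Set A) extends IsSymForm form : Prop where
  zero_mem : (0 : A) ∈ R
  closure_eq_top : AddSubgroup.closure R = ⊤
  neg_mem : ∀ α ∈ R, -α ∈ R
  cartan : ∀ α ∈ R, form α α ≠ 0 → ∀ β ∈ R, ∃ k : ℤ, 2 * form α β = (k : F) * form α α
  string : ∀ α ∈ R, form α α ≠ 0 → ∀ β ∈ R, ∃ p q : ℕ,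
      2 * form β α = ((p : F) - (q : F)) * form α α ∧
      (∀ k : ℤ, β + k • α ∈ R ↔ -(p : ℤ) ≤ k ∧ k ≤ (q : ℤ))
  ns_string : ∀ α ∈ R, form α α = 0 → ∀ β ∈ R, form α β ≠ 0 →
      (β - α ∈ R ∨ β + α ∈ R)

/-- Locally finite root supersystem: an EARS with nondegenerate form. -/
def IsLFRSS {F : Type*} [Field F] [CharZero F] {A : Type*} [AddCommGroup A]
    (form : A → A → F) (R : Set A) : Prop :=
  IsEARS form R ∧ ∀ a : A, (∀ b, form a b = 0) → a = 0

/-- `α` and `β` are connected in `X` by a finite chain with consecutive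
elements non-orthogonal. -/
def ConnectedIn {F : Type*} [Field F] {A : Type*} [AddCommGroup A]
    (form : A → A → F) (X : Set A) (α β : A) : Prop :=
  ∃ (n : ℕ) (c : Fin (n + 1) → A), (∀ i, c i ∈ X) ∧ c 0 = α ∧ c (Fin.last n) = β ∧
    ∀ i : Fin n, form (c i.castSucc) (c i.succ) ≠ 0

/-- A connected subset. -/
def IsConnectedSet {F : Type*} [Field F] {A : Type*} [AddCommGroup A]
    (form : A → A → F) (X : Set A) : Prop :=
  ∀ α ∈ X, ∀ β ∈ X, ConnectedIn form X α β

/-- Irreducibility: `R_re ≠ {0}` and `R \ R⁰` is connected. -/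
def IsIrreducibleRSS {F : Type*} [Field F] {A : Type*} [AddCommGroup A]
    (form : A → A → F) (R : Set A) : Prop :=
  reRoots form R ≠ {0} ∧ IsConnectedSet form (R \ formRadical form)

/-- Sub-supersystem of a locally finite root supersystem. -/
def IsSubSupersystem {F : Type*} [Field F] {A : Type*} [AddCommGroup A]
    (form : A → A → F) (R S : Set A) : Prop :=
  S ⊆ R ∧
  (∀ a ∈ AddSubgroup.closure S, (∀ b ∈ AddSubgroup.closure S, form a b = 0) → a = 0) ∧
  (0 : A) ∈ S ∧
  (∀ α ∈ S, form α α ≠ 0 → ∀ β ∈ S, ∀ k : ℤ,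
      2 * form β α = (k : F) * form α α → β - k • α ∈ S) ∧
  (∀ γ ∈ S, form γ γ = 0 → ∀ β ∈ S, form β γ ≠ 0 → (γ - β ∈ S ∨ γ + β ∈ S))

/-- `Π` is an integral base of `R` (a `ℤ`-basis of the group generated by `R`). -/
def IsIntegralBase {F : Type*} [Field F] {A : Type*} [AddCommGroup A]
    (form : A → A → F) (R P : Set A) : Prop :=
  P ⊆ R ∧ LinearIndependent ℤ (fun p : P => (p : A)) ∧
    Submodule.span ℤ P = Submodule.span ℤ R

/-- `Π` is a base of `R`. -/
def IsBase {F : Type*} [Field F] {A : Type*} [AddCommGroup A]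
    (form : A → A → F) (R P : Set A) : Prop :=
  IsIntegralBase form R P ∧
  ∀ α ∈ R \ formRadical form, ∃ (n : ℕ) (a : Fin n → A) (r : Fin n → ℤ),
    (∀ i, a i ∈ P) ∧ (∀ i, r i = 1 ∨ r i = -1) ∧
    α = ∑ i, r i • a i ∧
    ∀ t : Fin n, (∑ i ∈ Finset.Iic t, r i • a i) ∈ R \ formRadical form

/-!
For a real root `β`, axiom (S4) puts the whole segment between a root `γ` and its reflection
`γ - m β`, `m = 2(γ,β)/(β,β)`, into `R`; for `γ = β` this already gives `-β ∈ R`. By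
nondegeneracy and (S5), a nonzero isotropic root `α` is not orthogonal to some real root `β`,
which after replacing `β` by `-β` has `m > 0`. If `α + β ∈ R`, the reflection of `α + β` is
the real root `α - (m+1)β`, and the segment from its negative contains `-α`. Otherwise (S5)
gives `β - α ∈ R`; for `m = 1` the segment from `β - α` reaches `-α`, while for `m ≥ 2` the
root `β - α` is real and integrality of `2(α, β - α)/(β - α, β - α) = m/(1 - m)` forces
`m = 2`, where `-α` is reached through `2β - α`.
-/

section RootSupersystem

variable {F : Type*} [Field F] {A : Type*} [AddCommGroup A] {form : A → A → F}

namespace IsSymForm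

variable (hs : IsSymForm form)
include hs

def leftHom (c : A) : A →+ F := AddMonoidHom.mk' (form · c) (fun a b => hs.add_left a b c)

lemma neg_left (a b : A) : form (-a) b = -form a b := (hs.leftHom b).map_neg a

lemma sub_left (a b c : A) : form (a - b) c = form a c - form b c := (hs.leftHom c).map_sub a b

lemma zsmul_left (k : ℤ) (a b : A) : form (k • a) b = k * form a b := by
  rw [← zsmul_eq_mul]
  exact map_zsmul (hs.leftHom b) k a

lemma add_right (a b c : A) : form a (b + c) = form a b + form a c := by
  rw [hs.symm, hs.add_left, hs.symm b, hs.symm c]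

lemma neg_right (a b : A) : form a (-b) = -form a b := by
  rw [hs.symm, hs.neg_left, hs.symm]

lemma sub_right (a b c : A) : form a (b - c) = form a b - form a c := by
  rw [hs.symm, hs.sub_left, hs.symm b, hs.symm c]

lemma zsmul_right (k : ℤ) (a b : A) : form a (k • b) = k * form a b := by
  rw [hs.symm, hs.zsmul_left, hs.symm]

lemma exists_mem_ne_zero {R : Set A} (hR : AddSubgroup.closure R = ⊤)
    (hnd : ∀ a : A, (∀ b, form a b = 0) → a = 0) {α : A} (hα : α ≠ 0) :
    ∃ β ∈ R, form α β ≠ 0 := by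
  by_contra! h
  have hker : AddSubgroup.closure R ≤ (hs.leftHom α).ker :=
    (AddSubgroup.closure_le _).2 fun β hβ => by
      simp [leftHom, hs.symm β, h β hβ]
  refine hα (hnd α fun b => ?_)
  rw [hs.symm]
  exact hker (hR ▸ AddSubgroup.mem_top b)

end IsSymForm

def HasRootStrings (form : A → A → F) (R : Set A) : Prop :=
  ∀ α ∈ R, form α α ≠ 0 → ∀ β ∈ R, ∃ p q : ℕ,
    2 * form β α = ((p : F) - (q : F)) * form α α ∧
    (∀ k : ℤ, β + k • α ∈ R ↔ -(p : ℤ) ≤ k ∧ k ≤ (q : ℤ))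

def HasIsotropicSteps (form : A → A → F) (R : Set A) : Prop :=
  ∀ α ∈ R, form α α = 0 → ∀ β ∈ R, form α β ≠ 0 → (β - α ∈ R ∨ β + α ∈ R)

variable {R : Set A}

namespace HasRootStrings

variable (h4 : HasRootStrings form R)
include h4

lemma exists_int {β γ : A} (hβ : β ∈ R) (hββ : form β β ≠ 0) (hγ : γ ∈ R) :
    ∃ m : ℤ, 2 * form γ β = m * form β β := by
  obtain ⟨p, q, hpq, -⟩ := h4 β hβ hββ γ hγ
  exact ⟨p - q, by push_cast; exact hpq⟩

variable [CharZero F]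

lemma sub_zsmul_mem {β γ : A} (hβ : β ∈ R) (hββ : form β β ≠ 0) (hγ : γ ∈ R) {m : ℤ}
    (hm : 2 * form γ β = m * form β β) {k : ℤ} (hk₀ : min 0 m ≤ k) (hk₁ : k ≤ max 0 m) :
    γ - k • β ∈ R := by
  obtain ⟨p, q, hpq, hmem⟩ := h4 β hβ hββ γ hγ
  have hpqF : ((p - q : ℤ) : F) = m := by
    push_cast
    exact mul_right_cancel₀ hββ (hpq.symm.trans hm)
  have hpqZ : (p : ℤ) - q = m := Int.cast_injective hpqF
  rw [sub_eq_add_neg, ← neg_zsmul]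
  exact (hmem (-k)).2 ⟨by omega, by omega⟩

lemma neg_mem {α : A} (hα : α ∈ R) (hαα : form α α ≠ 0) : -α ∈ R := by
  have h := h4.sub_zsmul_mem hα hαα hα (m := 2) (k := 2) (by ring) (by simp) (by simp)
  rwa [two_zsmul, sub_add_cancel_left] at h

end HasRootStrings

variable [CharZero F]

section IsotropicRoot

variable (hs : IsSymForm form) (h4 : HasRootStrings form R)
  {α β : A} (hαα : form α α = 0) (hββ : form β β ≠ 0)
  {m : ℤ} (hm : 2 * form α β = m * form β β)
include hs h4 hαα hββ hm

lemma neg_mem_of_add_mem (hβ : β ∈ R) (hm₀ : 0 ≤ m) (hαβ : α + β ∈ R) : -α ∈ R := by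
  have hδ : α - (m + 1) • β ∈ R := by
    have h := h4.sub_zsmul_mem hβ hββ hαβ (m := m + 2) (k := m + 2)
      (by rw [hs.add_left]; push_cast; linear_combination hm) (by omega) (by omega)
    convert h using 1
    module
  have hδδ : form (α - (m + 1) • β) (α - (m + 1) • β) = (m + 1 : ℤ) * form β β := by
    simp only [hs.sub_left, hs.sub_right, hs.zsmul_left, hs.zsmul_right, hs.symm β α, hαα]
    push_cast
    linear_combination (-(m : F) - 1) * hm
  have hδδ₀ : form (α - (m + 1) • β) (α - (m + 1) • β) ≠ 0 := by
    rw [hδδ]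
    exact mul_ne_zero (by exact_mod_cast (show m + 1 ≠ 0 by omega)) hββ
  have h := h4.sub_zsmul_mem hβ hββ (h4.neg_mem hδ hδδ₀) (m := m + 2) (k := m + 1)
    (by
      simp only [hs.neg_left, hs.sub_left, hs.zsmul_left]
      push_cast
      linear_combination -hm)
    (by omega) (by omega)
  convert h using 1
  module

lemma eq_two_of_sub_mem (hα : α ∈ R) (hm₂ : 2 ≤ m) (hβα : β - α ∈ R) : m = 2 := by
  have hγγ : 2 * form (β - α) (β - α) = (2 - 2 * m : ℤ) * form β β := by
    simp only [hs.sub_left, hs.sub_right, hs.symm β α, hαα]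
    push_cast
    linear_combination -2 * hm
  have hγγ₀ : form (β - α) (β - α) ≠ 0 := by
    intro h
    rw [h, mul_zero, eq_comm] at hγγ
    exact mul_ne_zero (by exact_mod_cast (show 2 - 2 * m ≠ 0 by omega)) hββ hγγ
  obtain ⟨n, hn⟩ := h4.exists_int hβα hγγ₀ hα
  rw [hs.sub_right α, hαα, sub_zero] at hn
  have hnm : ((-(n + 1) * (m - 1) : ℤ) : F) * form β β = 1 * form β β := by
    push_cast at hγγ ⊢
    linear_combination hm - hn - (n / 2 : F) * hγγ
  have hnm' : -(n + 1) * (m - 1) = 1 := by exact_mod_cast mul_right_cancel₀ hββ hnm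
  have := Int.eq_one_of_mul_eq_one_left (by omega) hnm'
  omega

lemma neg_mem_of_sub_mem (hα : α ∈ R) (hβ : β ∈ R) (hm₁ : 1 ≤ m) (hβα : β - α ∈ R) :
    -α ∈ R := by
  obtain rfl | hm₂ := eq_or_lt_of_le hm₁
  · have h := h4.sub_zsmul_mem hβ hββ hβα (m := 1) (k := 1)
      (by rw [hs.sub_left]; push_cast at hm ⊢; linear_combination -hm)
      (by simp) (by simp)
    rwa [one_zsmul, sub_sub_cancel_left] at h
  obtain rfl := eq_two_of_sub_mem hs h4 hαα hββ hm hα hm₂ hβα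
  have hγγ : form (β - α) (β - α) = -form β β := by
    simp only [hs.sub_left, hs.sub_right, hs.symm β α, hαα]
    push_cast at hm
    linear_combination -hm
  have h2βα : α - (-2 : ℤ) • (β - α) ∈ R :=
    h4.sub_zsmul_mem hβα (by rw [hγγ]; exact neg_ne_zero.2 hββ) hα (m := -2)
      (by rw [hs.sub_right, hγγ, hαα]; push_cast at hm ⊢; linear_combination hm)
      (by simp) (by simp)
  have h := h4.sub_zsmul_mem hβ hββ h2βα (m := 2) (k := 2)
    (by
      simp only [hs.sub_left, hs.zsmul_left]
      push_cast at hm ⊢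
      linear_combination -hm)
    (by simp) (by simp)
  convert h using 1
  module

lemma neg_mem_of_pos (h5 : HasIsotropicSteps form R) (hα : α ∈ R) (hβ : β ∈ R)
    (hm₀ : 0 < m) : -α ∈ R := by
  by_cases hαβ : α + β ∈ R
  · exact neg_mem_of_add_mem hs h4 hαα hββ hm hβ hm₀.le hαβ
  have hαβ₀ : form α β ≠ 0 := by
    intro h
    rw [h, mul_zero, eq_comm] at hm
    exact mul_ne_zero (by exact_mod_cast hm₀.ne') hββ hm
  rcases h5 α hα hαα β hβ hαβ₀ with hβα | hβα
  · exact neg_mem_of_sub_mem hs h4 hαα hββ hm hα hβ hm₀ hβα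
  · exact absurd (add_comm β α ▸ hβα) hαβ

end IsotropicRoot

section

variable (hs : IsSymForm form) (h4 : HasRootStrings form R) (h5 : HasIsotropicSteps form R)
  {α : A} (hα : α ∈ R) (hαα : form α α = 0)
include hs h4 h5 hα hαα

lemma neg_mem_of_isotropic_of_real {β : A} (hβ : β ∈ R) (hββ : form β β ≠ 0)
    (hαβ : form α β ≠ 0) : -α ∈ R := by
  obtain ⟨m, hm⟩ := h4.exists_int hβ hββ hα
  rcases lt_trichotomy m 0 with hm₀ | rfl | hm₀
  · have hm' : 2 * form α (-β) = (-m : ℤ) * form (-β) (-β) := by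
      simp only [hs.neg_left, hs.neg_right, neg_neg]
      push_cast
      linear_combination -hm
    exact neg_mem_of_pos hs h4 hαα (by simpa [hs.neg_left, hs.neg_right] using hββ) hm' h5 hα
      (h4.neg_mem hβ hββ) (by omega)
  · simp [hαβ] at hm
  · exact neg_mem_of_pos hs h4 hαα hββ hm h5 hα hβ hm₀

lemma neg_mem_of_isotropic {β : A} (hβ : β ∈ R) (hαβ : form α β ≠ 0) : -α ∈ R := by
  by_cases hββ : form β β = 0
  · rcases h5 β hβ hββ α hα (by rwa [hs.symm]) with hδ | hδ
    · refine neg_mem_of_isotropic_of_real hs h4 h5 hα hαα hδ ?_ ?_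
      · simp only [hs.sub_left, hs.sub_right, hs.symm β α, hαα, hββ]
        intro h
        exact hαβ (by linear_combination (-1 / 2 : F) * h)
      · simpa [hs.sub_right, hαα] using hαβ
    · refine neg_mem_of_isotropic_of_real hs h4 h5 hα hαα hδ ?_ ?_
      · simp only [hs.add_left, hs.add_right, hs.symm β α, hαα, hββ]
        intro h
        exact hαβ (by linear_combination (1 / 2 : F) * h)
      · simpa [hs.add_right, hαα] using hαβ
  · exact neg_mem_of_isotropic_of_real hs h4 h5 hα hαα hβ hββ hαβ

end

end RootSupersystem

theorem stmt2_general {F : Type*} [Field F] [CharZero F] {A : Type*} [AddCommGroup A]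
    (form : A → A → F) (R : Set A)
    (hs : IsSymForm form)
    (hnd : ∀ a : A, (∀ b, form a b = 0) → a = 0)
    (hS1 : (0 : A) ∈ R ∧ AddSubgroup.closure R = ⊤)
    (hS4 : ∀ α ∈ R, form α α ≠ 0 → ∀ β ∈ R, ∃ p q : ℕ,
        2 * form β α = ((p : F) - (q : F)) * form α α ∧
        (∀ k : ℤ, β + k • α ∈ R ↔ -(p : ℤ) ≤ k ∧ k ≤ (q : ℤ)))
    (hS5 : ∀ α ∈ R, form α α = 0 → ∀ β ∈ R, form α β ≠ 0 → (β - α ∈ R ∨ β + α ∈ R)) :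
    R = -R := by
  have hneg : ∀ α ∈ R, -α ∈ R := by
    intro α hα
    by_cases hαα : form α α = 0
    · obtain rfl | hα₀ := eq_or_ne α 0
      · simpa using hS1.1
      obtain ⟨β, hβ, hαβ⟩ := hs.exists_mem_ne_zero hS1.2 hnd hα₀
      exact neg_mem_of_isotropic hs hS4 hS5 hα hαα hβ hαβ
    · exact HasRootStrings.neg_mem hS4 hα hαα
  ext α
  exact ⟨hneg α, fun h => neg_neg α ▸ hneg (-α) h⟩

theorem stmt2 {F : Type*} [Field F] [CharZero F] {A : Type*} [AddCommGroup A] [Nontrivial A]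
    (form : A → A → F) (R : Set A)
    (hs : IsSymForm form)
    (hnd : ∀ a : A, (∀ b, form a b = 0) → a = 0)
    (hS1 : (0 : A) ∈ R ∧ AddSubgroup.closure R = ⊤)
    (hS3 : ∀ α ∈ R, form α α ≠ 0 → ∀ β ∈ R, ∃ k : ℤ, 2 * form α β = (k : F) * form α α)
    (hS4 : ∀ α ∈ R, form α α ≠ 0 → ∀ β ∈ R, ∃ p q : ℕ,
        2 * form β α = ((p : F) - (q : F)) * form α α ∧
        (∀ k : ℤ, β + k • α ∈ R ↔ -(p : ℤ) ≤ k ∧ k ≤ (q : ℤ)))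
    (hS5 : ∀ α ∈ R, form α α = 0 → ∀ β ∈ R, form α β ≠ 0 → (β - α ∈ R ∨ β + α ∈ R)) :
    R = -R :=
  stmt2_general form R hs hnd hS1 hS4 hS5
end

section
/- Let (A, (·,·), R) be a locally finite root supersystem over a field F of characteristic zero. Set A_re := ⟨R_re⟩, the subgroup of A generated by R_re, with the restricted form. Then (A_re, (·,·)|_{A_re×A_re}, R_re) is a locally finite root system, i.e., a locally finite root supersystem all of whose nonzero roots are real (its set of nonsingular roots is {0}); in particular the form restricted to A_re is nondegenerate. -/
open Pointwise

/-!
The heart of the matter: if `δ` is a nonzero isotropic root and `α` a real root with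
`δ + α ∈ R`, then the Cartan integer of `δ` against `α` is negative. Hence an `α`-string through
a real root meets nonzero isotropic roots at most at its two ends, and the real roots in it
still form an unbroken string. Nondegeneracy on `⟨R_re⟩` follows by induction on the length of
a sum of real roots orthogonal to `R_re`.
-/

namespace IsSymForm

variable {F : Type*} [Field F] {A : Type*} [AddCommGroup A] {form : A → A → F}

def addHom (hs : IsSymForm form) (a : A) : A →+ F :=
  AddMonoidHom.mk' (form a) fun b c => by rw [hs.symm, hs.add_left, hs.symm b, hs.symm c]

theorem form_add_right (hs : IsSymForm form) (a b c : A) :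
    form a (b + c) = form a b + form a c :=
  map_add (hs.addHom a) b c

theorem form_zero_right (hs : IsSymForm form) (a : A) : form a 0 = 0 :=
  map_zero (hs.addHom a)

theorem form_zero_left (hs : IsSymForm form) (b : A) : form 0 b = 0 := by
  rw [hs.symm, hs.form_zero_right]

theorem form_neg_right (hs : IsSymForm form) (a b : A) : form a (-b) = -form a b :=
  map_neg (hs.addHom a) b

theorem form_neg_left (hs : IsSymForm form) (a b : A) : form (-a) b = -form a b := by
  rw [hs.symm, hs.form_neg_right, hs.symm]

theorem form_neg_neg (hs : IsSymForm form) (a : A) : form (-a) (-a) = form a a := by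
  rw [hs.form_neg_left, hs.form_neg_right, neg_neg]

theorem form_zsmul_right (hs : IsSymForm form) (k : ℤ) (a b : A) :
    form a (k • b) = k * form a b :=
  (map_zsmul (hs.addHom a) k b).trans (zsmul_eq_mul _ _)

theorem form_zsmul_left (hs : IsSymForm form) (k : ℤ) (a b : A) :
    form (k • a) b = k * form a b := by
  rw [hs.symm, hs.form_zsmul_right, hs.symm]

theorem form_add_zsmul_self (hs : IsSymForm form) (k : ℤ) (a b : A) :
    form (b + k • a) (b + k • a) = form b b + 2 * k * form b a + k ^ 2 * form a a := by
  rw [hs.add_left, hs.form_add_right, hs.form_add_right, hs.form_zsmul_left,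
    hs.form_zsmul_left, hs.form_zsmul_right, hs.form_zsmul_right, hs.symm a b]
  ring

end IsSymForm

section reRoots

variable {F : Type*} [Field F] {A : Type*} [AddCommGroup A] {form : A → A → F} {R : Set A}
  {x : A}

theorem zero_mem_reRoots : (0 : A) ∈ reRoots form R := Or.inr rfl

theorem eq_zero_of_mem_reRoots (hx : x ∈ reRoots form R) (hxx : form x x = 0) : x = 0 := by
  rcases hx with ⟨-, hx⟩ | hx
  exacts [absurd hxx hx, hx]

theorem mem_of_mem_reRoots (h0 : (0 : A) ∈ R) (hx : x ∈ reRoots form R) : x ∈ R := by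
  rcases hx with ⟨hx, -⟩ | rfl
  exacts [hx, h0]

theorem mem_reRoots_iff_of_mem (hx : x ∈ R) : x ∈ reRoots form R ↔ (form x x = 0 → x = 0) :=
  ⟨eq_zero_of_mem_reRoots, fun h =>
    (em (form x x = 0)).elim (fun hxx => Or.inr (h hxx)) fun hxx => Or.inl ⟨hx, hxx⟩⟩

end reRoots

namespace IsEARS

variable {F : Type*} [Field F] [CharZero F] {A : Type*} [AddCommGroup A] {form : A → A → F}
  {R : Set A} {α β δ μ x y : A}

theorem neg_mem_reRoots (hR : IsEARS form R) (hx : x ∈ reRoots form R) :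
    -x ∈ reRoots form R := by
  rcases hx with ⟨hx, hxx⟩ | rfl
  · exact Or.inl ⟨hR.neg_mem x hx, by rwa [hR.form_neg_neg]⟩
  · simpa using zero_mem_reRoots

theorem add_zsmul_mem (hR : IsEARS form R) (hα : α ∈ R) (hαα : form α α ≠ 0) (hβ : β ∈ R)
    {s k : ℤ} (hs : 2 * form β α = s * form α α) (hk : 0 ≤ k ∧ k ≤ -s ∨ -s ≤ k ∧ k ≤ 0) :
    β + k • α ∈ R := by
  obtain ⟨p, q, hpq, hstr⟩ := hR.string α hα hαα β hβ
  have : (s : F) = p - q := mul_right_cancel₀ hαα (hs.symm.trans hpq)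
  have : s = p - q := by exact_mod_cast this
  exact (hstr k).2 ⟨by omega, by omega⟩

theorem exists_rat_abs_le_one (hR : IsEARS form R) (hx : x ∈ R) (hy : y ∈ R)
    (hxy : form x y ≠ 0) : ∃ q : ℚ, |q| ≤ 1 ∧ form x x = q * (2 * form x y) := by
  by_cases hxx : form x x = 0
  · exact ⟨0, by simp, by simp [hxx]⟩
  obtain ⟨m, hm⟩ := hR.cartan x hx hxx y hy
  have hm0 : m ≠ 0 := by rintro rfl; simp [hxy] at hm
  refine ⟨1 / m, ?_, ?_⟩
  · rw [abs_div, abs_one]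
    exact div_le_one_of_le₀ (by exact_mod_cast Int.one_le_abs hm0) (abs_nonneg _)
  · rw [hm]; push_cast; field_simp

/-- The Cartan integer of an isotropic root `δ` against a real root `α` with `δ + α ∈ R`
cannot be positive: otherwise `(δ + α, δ + α) / 2(δ + α, δ) = (t + 1) / t` would exceed `1`. -/
theorem cartan_nonpos_of_add_mem (hR : IsEARS form R) (hδ : δ ∈ R) (hδδ : form δ δ = 0)
    (hαα : form α α ≠ 0) {t : ℤ} (hδα : 2 * form δ α = t * form α α) (hadd : δ + α ∈ R) :
    t ≤ 0 := by
  by_contra! ht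
  have hsum : form (δ + α) δ = form δ α := by
    rw [hR.add_left, hδδ, hR.symm α δ, zero_add]
  obtain ⟨q, hq, hqe⟩ := hR.exists_rat_abs_le_one hadd hδ (by
    rw [hsum]; intro h0; simp [h0, ht.ne', hαα] at hδα)
  have hnorm : form (δ + α) (δ + α) = (t + 1) * form α α := by
    have := hR.form_add_zsmul_self 1 α δ
    rw [one_zsmul, hδδ] at this
    rw [this]
    linear_combination hδα
  rw [hnorm, hsum, hδα, ← mul_assoc] at hqe
  have : ((t + 1 : ℤ) : ℚ) = q * t := by exact_mod_cast mul_right_cancel₀ hαα hqe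
  push_cast at this
  nlinarith [le_abs_self q, (by exact_mod_cast ht : (0 : ℚ) < t)]

theorem abs_sub_le_two_of_add_zsmul_mem (hR : IsEARS form R) (hδ : δ ∈ R)
    (hδδ : form δ δ = 0) (hμδ : form μ δ ≠ 0) {ζ ζ' : ℤ} (hζ : μ + ζ • δ ∈ R)
    (hζ' : μ + ζ' • δ ∈ R) : |ζ - ζ'| ≤ 2 := by
  have key : ∀ z : ℤ, μ + z • δ ∈ R →
      ∃ q : ℚ, |q| ≤ 1 ∧ form μ μ + 2 * z * form μ δ = q * (2 * form μ δ) := by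
    intro z hz
    have hpair : form (μ + z • δ) δ = form μ δ := by
      rw [hR.add_left, hR.form_zsmul_left, hδδ, mul_zero, add_zero]
    obtain ⟨q, hq, hqe⟩ := hR.exists_rat_abs_le_one hz hδ (hpair ▸ hμδ)
    refine ⟨q, hq, ?_⟩
    rwa [hR.form_add_zsmul_self, hδδ, mul_zero, add_zero, hpair] at hqe
  obtain ⟨q, hq, hqe⟩ := key ζ hζ
  obtain ⟨q', hq', hqe'⟩ := key ζ' hζ'
  have h2 : (2 * form μ δ) ≠ 0 := mul_ne_zero two_ne_zero hμδ
  have : (((ζ - ζ' : ℤ) : ℚ) : F) = ((q - q' : ℚ) : F) := by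
    push_cast
    apply mul_right_cancel₀ h2
    linear_combination hqe - hqe'
  have : ((ζ - ζ' : ℤ) : ℚ) = q - q' := Rat.cast_injective this
  have : |((ζ - ζ' : ℤ) : ℚ)| ≤ 2 := by
    rw [this]
    exact (abs_sub _ _).trans (by linarith)
  exact_mod_cast this

theorem exists_cartan_neg_of_form_sum_eq_zero (hR : IsEARS form R) [DecidableEq A]
    {s : Multiset A} (hs : ∀ x ∈ s, x ∈ R) (hβ : β ∈ s) (hββ : form β β ≠ 0)
    (hsum : form β s.sum = 0) :
    ∃ γ ∈ s.erase β, ∃ k : ℤ, k < 0 ∧ 2 * form γ β = k * form β β := by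
  by_contra! hc
  obtain ⟨K, hK⟩ : ∃ K : ℕ, 2 * form β (s.erase β).sum = K * form β β := by
    refine Multiset.sum_induction (fun x => ∃ K : ℕ, 2 * form β x = K * form β β) _
      (fun a b ⟨K, hK⟩ ⟨K', hK'⟩ => ⟨K + K', ?_⟩) ⟨0, by simp [hR.form_zero_right]⟩
      fun γ hγ => ?_
    · rw [hR.form_add_right]; push_cast; linear_combination hK + hK'
    obtain ⟨k, hk⟩ := hR.cartan β (hs β hβ) hββ γ (hs γ (Multiset.mem_of_mem_erase hγ))
    lift k to ℕ using not_lt.1 fun hk0 => hc γ hγ k hk0 (by rw [hR.symm, hk])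
    exact ⟨k, by simpa using hk⟩
  rw [← Multiset.sum_erase hβ, hR.form_add_right] at hsum
  have : ((K + 2 : ℕ) : F) * form β β = 0 := by push_cast; linear_combination 2 * hsum - hK
  exact Nat.cast_ne_zero.2 (by omega) ((mul_eq_zero.1 this).resolve_right hββ)

theorem exists_multiset_of_mem_closure_reRoots (hR : IsEARS form R)
    (hx : x ∈ AddSubgroup.closure (reRoots form R)) :
    ∃ s : Multiset A, (∀ y ∈ s, y ∈ reRoots form R) ∧ s.sum = x := by
  rw [← AddSubgroup.mem_toAddSubmonoid, AddSubgroup.closure_toAddSubmonoid] at hx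
  obtain ⟨s, hs, rfl⟩ := AddSubmonoid.exists_multiset_of_mem_closure hx
  refine ⟨s, fun y hy => ?_, rfl⟩
  rcases hs y hy with hy | hy
  · exact hy
  · simpa using hR.neg_mem_reRoots hy

end IsEARS

namespace IsLFRSS

variable {F : Type*} [Field F] [CharZero F] {A : Type*} [AddCommGroup A] {form : A → A → F}
  {R : Set A} {α β δ : A}

theorem exists_mem_form_ne_zero (h : IsLFRSS form R) (hδ : δ ≠ 0) : ∃ μ ∈ R, form δ μ ≠ 0 := by
  by_contra! hR
  have hle : AddSubgroup.closure R ≤ (h.1.addHom δ).ker := (AddSubgroup.closure_le _).2 hR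
  rw [h.1.closure_eq_top] at hle
  exact hδ (h.2 δ fun b => hle (AddSubgroup.mem_top b))

/-- This is where nondegeneracy enters: in an affine root system `δ + α` is a root for the
null root `δ`. Reflecting along `α` and `δ + α` produces `3δ ∈ R`; a root `μ` with
`(δ, μ) ≠ 0` then gives roots `μ` and `μ ± 3δ` too far apart for the Cartan integers. -/
theorem add_notMem_of_form_eq_zero (h : IsLFRSS form R) (hδ : δ ∈ R) (hδ0 : δ ≠ 0)
    (hδδ : form δ δ = 0) (hα : α ∈ R) (hαα : form α α ≠ 0) (hδα : form δ α = 0) :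
    δ + α ∉ R := by
  intro hγ
  have hR := h.1
  have hαδ : form α δ = 0 := by rw [hR.symm, hδα]
  have hγγ : form (δ + α) (δ + α) = form α α := by
    rw [hR.add_left, hR.form_add_right, hR.form_add_right, hδδ, hδα, hαδ]; ring
  have hγ0 : form (δ + α) (δ + α) ≠ 0 := hγγ ▸ hαα
  have h2δ_add : (2 : ℤ) • δ + α ∈ R := by
    have := hR.add_zsmul_mem hγ hγ0 (hR.neg_mem α hα) (s := -2) (k := 2)
      (by rw [hR.form_neg_left, hR.form_add_right, hαδ, hγγ]; push_cast; ring) (by omega)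
    convert this using 1; module
  have h2δ_sub : (2 : ℤ) • δ - α ∈ R := by
    have := hR.add_zsmul_mem hα hαα h2δ_add (s := 2) (k := -2)
      (by rw [hR.add_left, hR.form_zsmul_left, hδα]; push_cast; ring) (by omega)
    convert this using 1; module
  have h3δ : (3 : ℤ) • δ ∈ R := by
    have := hR.add_zsmul_mem hγ hγ0 h2δ_sub (s := -2) (k := 1)
      (by
        rw [hγγ, sub_eq_add_neg, hR.add_left, hR.form_neg_left, hR.form_zsmul_left,
          hR.form_add_right, hR.form_add_right, hδδ, hδα, hαδ]
        push_cast; ring)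
      (by omega)
    convert this using 1; module
  obtain ⟨μ, hμ, hδμ⟩ := h.exists_mem_form_ne_zero hδ0
  have hμδ : form μ δ ≠ 0 := by rwa [hR.symm]
  have h3δμ : form ((3 : ℤ) • δ) μ ≠ 0 := by
    rw [hR.form_zsmul_left]; exact mul_ne_zero (by norm_num) hδμ
  have h3δ3δ : form ((3 : ℤ) • δ) ((3 : ℤ) • δ) = 0 := by
    rw [hR.form_zsmul_left, hR.form_zsmul_right, hδδ]; ring
  have hμ0 : μ + (0 : ℤ) • δ ∈ R := by rwa [zero_smul, add_zero]
  rcases hR.ns_string _ h3δ h3δ3δ μ hμ h3δμ with hsub | hadd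
  · have := hR.abs_sub_le_two_of_add_zsmul_mem hδ hδδ hμδ hμ0 (ζ' := -3)
      (by rwa [neg_smul, ← sub_eq_add_neg])
    norm_num at this
  · have := hR.abs_sub_le_two_of_add_zsmul_mem hδ hδδ hμδ hμ0 hadd
    norm_num at this

theorem cartan_neg_of_add_mem (h : IsLFRSS form R) (hδ : δ ∈ R) (hδ0 : δ ≠ 0)
    (hδδ : form δ δ = 0) (hα : α ∈ R) (hαα : form α α ≠ 0) {t : ℤ}
    (hδα : 2 * form δ α = t * form α α) (hadd : δ + α ∈ R) : t < 0 := by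
  rcases (h.1.cartan_nonpos_of_add_mem hδ hδδ hαα hδα hadd).lt_or_eq with ht | rfl
  · exact ht
  · exact absurd hadd (h.add_notMem_of_form_eq_zero hδ hδ0 hδδ hα hαα (by simpa using hδα))

/-- An interior nonzero isotropic root `δ` of the string would have `δ + α, δ - α ∈ R`, hence a
Cartan integer against `α` that is both negative and positive. -/
theorem eq_or_eq_of_isotropic_add_zsmul (h : IsLFRSS form R) (hα : α ∈ R)
    (hαα : form α α ≠ 0) {p q : ℕ} (hpq : 2 * form β α = (p - q) * form α α)
    (hstr : ∀ k : ℤ, β + k • α ∈ R ↔ -(p : ℤ) ≤ k ∧ k ≤ q) {k : ℤ} (hk : β + k • α ∈ R)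
    (hk0 : β + k • α ≠ 0) (hkk : form (β + k • α) (β + k • α) = 0) : k = -p ∨ k = q := by
  have hR := h.1
  by_contra! hne
  obtain ⟨hp, hq⟩ := (hstr k).1 hk
  have hδα : 2 * form (β + k • α) α = ((p - q + 2 * k : ℤ) : F) * form α α := by
    rw [hR.add_left, hR.form_zsmul_left]; push_cast; linear_combination hpq
  have hup := h.cartan_neg_of_add_mem hk hk0 hkk hα hαα hδα (by
    convert (hstr (k + 1)).2 ⟨by omega, by omega⟩ using 1; module)
  have hdown := h.cartan_neg_of_add_mem hk hk0 hkk (hR.neg_mem α hα)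
    (by rwa [hR.form_neg_neg]) (t := -(p - q + 2 * k))
    (by rw [hR.form_neg_right, hR.form_neg_neg]; push_cast at hδα ⊢; linear_combination -hδα)
    (by convert (hstr (k - 1)).2 ⟨by omega, by omega⟩ using 1; module)
  omega

/-- If the `α`-string `β - pα, …, β + qα` through a real root `β` contains a nonzero isotropic
root, then `(β + kα, β + kα)` vanishes exactly at both ends (it is symmetric under
`k ↦ q - p - k`), so the real roots of the string are `β - (p-1)α, …, β + (q-1)α`. -/
theorem reRoots_string_of_isotropic (h : IsLFRSS form R) (hα : α ∈ R) (hαα : form α α ≠ 0)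
    (hβ : β ∈ reRoots form R) {p q : ℕ} (hpq : 2 * form β α = (p - q) * form α α)
    (hstr : ∀ k : ℤ, β + k • α ∈ R ↔ -(p : ℤ) ≤ k ∧ k ≤ q) {k₀ : ℤ} (hk₀ : β + k₀ • α ∈ R)
    (hk₀0 : β + k₀ • α ≠ 0) (hk₀k₀ : form (β + k₀ • α) (β + k₀ • α) = 0) :
    ∃ p' q' : ℕ, 2 * form β α = (p' - q') * form α α ∧
      ∀ k : ℤ, β + k • α ∈ reRoots form R ↔ -(p' : ℤ) ≤ k ∧ k ≤ q' := by
  have hR := h.1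
  set N : ℤ → F := fun k => form (β + k • α) (β + k • α) with hN
  have hNsymm : N (-p) = N q := by
    simp only [hN, hR.form_add_zsmul_self]; push_cast; linear_combination (-(p + q : F)) * hpq
  have hne : ∀ e : ℤ, β + e • α ≠ 0 := by
    intro e he
    have : β + k₀ • α = (k₀ - e) • α := by rw [← sub_eq_zero, ← he]; module
    rw [this, hR.form_zsmul_left, hR.form_zsmul_right, ← mul_assoc] at hk₀k₀
    have : ((k₀ - e : ℤ) : F) = 0 := by simpa [hαα] using hk₀k₀
    have : k₀ = e := sub_eq_zero.1 (by exact_mod_cast this)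
    exact hk₀0 (by rw [this, he])
  have hends : N (-p) = 0 ∧ N q = 0 := by
    rcases h.eq_or_eq_of_isotropic_add_zsmul hα hαα hpq hstr hk₀ hk₀0 hk₀k₀ with rfl | rfl
    exacts [⟨hk₀k₀, hNsymm ▸ hk₀k₀⟩, ⟨hNsymm.symm ▸ hk₀k₀, hk₀k₀⟩]
  have hN0 : N 0 ≠ 0 := fun h0 =>
    hne 0 (eq_zero_of_mem_reRoots (by simpa using hβ) h0)
  have hmem : ∀ k : ℤ, β + k • α ∈ reRoots form R ↔ (-(p : ℤ) ≤ k ∧ k ≤ q) ∧ N k ≠ 0 :=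
    fun k => ⟨fun hk => ⟨(hstr k).1 (mem_of_mem_reRoots hR.zero_mem hk),
        fun hkk => hne k (eq_zero_of_mem_reRoots hk hkk)⟩,
      fun hk => (mem_reRoots_iff_of_mem ((hstr k).2 hk.1)).2 fun hkk => absurd hkk hk.2⟩
  obtain ⟨p', rfl⟩ : ∃ p', p = p' + 1 :=
    Nat.exists_eq_add_one.2 (Nat.pos_of_ne_zero fun hp => hN0 (by simpa [hp] using hends.1))
  obtain ⟨q', rfl⟩ : ∃ q', q = q' + 1 :=
    Nat.exists_eq_add_one.2 (Nat.pos_of_ne_zero fun hq => hN0 (by simpa [hq] using hends.2))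
  refine ⟨p', q', by rw [hpq]; push_cast; ring, fun k => ?_⟩
  rw [hmem]
  constructor
  · rintro ⟨hk, hkk⟩
    have : k ≠ -((p' + 1 : ℕ) : ℤ) := by rintro rfl; exact hkk hends.1
    have : k ≠ ((q' + 1 : ℕ) : ℤ) := by rintro rfl; exact hkk hends.2
    omega
  · intro hk
    refine ⟨by omega, fun hkk => ?_⟩
    rcases h.eq_or_eq_of_isotropic_add_zsmul hα hαα hpq hstr ((hstr k).2 (by omega)) (hne k)
      hkk with rfl | rfl <;> omega

theorem reRoots_string (h : IsLFRSS form R) (hα : α ∈ R) (hαα : form α α ≠ 0)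
    (hβ : β ∈ reRoots form R) :
    ∃ p q : ℕ, 2 * form β α = (p - q) * form α α ∧
      ∀ k : ℤ, β + k • α ∈ reRoots form R ↔ -(p : ℤ) ≤ k ∧ k ≤ q := by
  obtain ⟨p, q, hpq, hstr⟩ := h.1.string α hα hαα β (mem_of_mem_reRoots h.1.zero_mem hβ)
  by_cases hiso : ∃ k : ℤ, β + k • α ∈ R ∧ β + k • α ≠ 0 ∧
      form (β + k • α) (β + k • α) = 0
  · obtain ⟨k₀, hk₀, hk₀0, hk₀k₀⟩ := hiso
    exact h.reRoots_string_of_isotropic hα hαα hβ hpq hstr hk₀ hk₀0 hk₀k₀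
  push Not at hiso
  refine ⟨p, q, hpq, fun k => ?_⟩
  rw [← hstr]
  exact ⟨mem_of_mem_reRoots h.1.zero_mem,
    fun hk => (mem_reRoots_iff_of_mem hk).2 fun hkk => by_contra fun hk0 => hiso k hk hk0 hkk⟩

theorem add_mem_reRoots_of_cartan_neg (h : IsLFRSS form R) (hα : α ∈ R) (hαα : form α α ≠ 0)
    (hβ : β ∈ reRoots form R) {k : ℤ} (hk : k < 0) (hβα : 2 * form β α = k * form α α) :
    β + α ∈ reRoots form R := by
  obtain ⟨p, q, hpq, hstr⟩ := h.reRoots_string hα hαα hβ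
  have : (k : F) = p - q := mul_right_cancel₀ hαα (hβα.symm.trans hpq)
  have : k = p - q := by exact_mod_cast this
  simpa using (hstr 1).2 ⟨by omega, by omega⟩

/-- Orthogonality to a term `β` forces a negative Cartan integer of another term `γ` against
`β`, so `γ + β ∈ R_re` and the sum can be shortened. -/
theorem multiset_sum_eq_zero (h : IsLFRSS form R) (s : Multiset A)
    (hs : ∀ x ∈ s, x ∈ reRoots form R) (horth : ∀ ρ ∈ reRoots form R, form s.sum ρ = 0) :
    s.sum = 0 := by
  classical
  induction hn : Multiset.card s using Nat.strong_induction_on generalizing s with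
  | _ n ih =>
  have hshorter : ∀ t : Multiset A, Multiset.card t < n → (∀ x ∈ t, x ∈ reRoots form R) →
      t.sum = s.sum → s.sum = 0 := fun t ht hts htsum =>
    htsum ▸ ih _ ht t hts (htsum ▸ horth) rfl
  have hsR : ∀ x ∈ s, x ∈ R := fun x hx => mem_of_mem_reRoots h.1.zero_mem (hs x hx)
  rcases s.empty_or_exists_mem with rfl | ⟨β, hβ⟩
  · simp
  have hlt := Multiset.card_erase_lt_of_mem hβ
  by_cases hββ : form β β = 0
  · refine hshorter (s.erase β) (hn ▸ hlt) (fun x hx => hs x (Multiset.mem_of_mem_erase hx)) ?_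
    rw [← Multiset.sum_erase hβ, eq_zero_of_mem_reRoots (hs β hβ) hββ, zero_add]
  obtain ⟨γ, hγ, k, hk, hγβ⟩ := h.1.exists_cartan_neg_of_form_sum_eq_zero hsR hβ hββ
    (by rw [h.1.symm]; exact horth β (hs β hβ))
  have hlt' := Multiset.card_erase_lt_of_mem hγ
  refine hshorter ((γ + β) ::ₘ (s.erase β).erase γ) (by rw [Multiset.card_cons]; omega) ?_ ?_
  · intro x hx
    rcases Multiset.mem_cons.1 hx with rfl | hx
    · exact h.add_mem_reRoots_of_cartan_neg (hsR β hβ) hββ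
        (hs γ (Multiset.mem_of_mem_erase hγ)) hk hγβ
    · exact hs x (Multiset.mem_of_mem_erase (Multiset.mem_of_mem_erase hx))
  · rw [Multiset.sum_cons, ← Multiset.sum_erase hβ, ← Multiset.sum_erase hγ]; abel

theorem isLFRSS_closure_reRoots (h : IsLFRSS form R) :
    IsLFRSS (fun a b : AddSubgroup.closure (reRoots form R) => form a b)
      (Subtype.val ⁻¹' reRoots form R) := by
  have hR := h.1
  have hmem : ∀ x ∈ reRoots form R, x ∈ R := fun x => mem_of_mem_reRoots hR.zero_mem
  refine ⟨⟨⟨fun a b => hR.symm a b, fun a b c => hR.add_left a b c⟩, zero_mem_reRoots,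
    AddSubgroup.closure_closure_coe_preimage, fun x hx => hR.neg_mem_reRoots hx,
    fun x hx hxx y hy => hR.cartan x (hmem x hx) hxx y (hmem y hy), ?_, ?_⟩, ?_⟩
  · intro x hx hxx y hy
    obtain ⟨p, q, hpq, hstr⟩ := h.reRoots_string (hmem x hx) hxx hy
    exact ⟨p, q, hpq, fun k => by simpa using hstr k⟩
  · intro x hx hxx y _ hxy
    exact absurd (by simp [eq_zero_of_mem_reRoots hx hxx, hR.form_zero_left]) hxy
  · intro a ha
    obtain ⟨s, hs, hsum⟩ := hR.exists_multiset_of_mem_closure_reRoots a.2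
    ext
    rw [← hsum]
    exact h.multiset_sum_eq_zero s hs fun ρ hρ => hsum ▸ ha ⟨ρ, AddSubgroup.subset_closure hρ⟩

end IsLFRSS

theorem nsRoots_preimage_reRoots {F : Type*} [Field F] {A : Type*} [AddCommGroup A]
    (form : A → A → F) (R : Set A) (B : AddSubgroup A) :
    nsRoots (fun a b : B => form a b) (Subtype.val ⁻¹' reRoots form R) = {0} := by
  refine Set.Subset.antisymm ?_ Set.subset_union_right
  rintro x (⟨hx, hxx, -⟩ | hx)
  exacts [Subtype.ext (eq_zero_of_mem_reRoots hx hxx), hx]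

theorem stmt7 {F : Type*} [Field F] [CharZero F] {A : Type*} [AddCommGroup A]
    (form : A → A → F) (R : Set A) (h : IsLFRSS form R) :
    IsLFRSS (fun a b : AddSubgroup.closure (reRoots form R) => form ↑a ↑b)
      (Subtype.val ⁻¹' reRoots form R : Set (AddSubgroup.closure (reRoots form R))) ∧
    nsRoots (fun a b : AddSubgroup.closure (reRoots form R) => form ↑a ↑b)
      (Subtype.val ⁻¹' reRoots form R : Set (AddSubgroup.closure (reRoots form R))) = {0} :=
  ⟨h.isLFRSS_closure_reRoots, nsRoots_preimage_reRoots form R _⟩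
end
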